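/- arXiv:2605.02556 — 4 statements merged into one kernel-verified Lean document; each statement's English description precedes it below -/
import Mathlib

section
/- Let d₁ and d₂ be positive integers and let J be a linear map from ℝ^{d₂} to the space of linear endomorphisms of ℝ^{d₁} such that for every λ ∈ ℝ^{d₂} the operator J_λ is skew-adjoint with respect to the Euclidean inner product (i.e. ⟨J_λ x, y⟩ = −⟨x, J_λ y⟩ for all x, y ∈ ℝ^{d₁}), and such that J_λ is bijective for every λ ≠ 0. Then d₂ < d₁. -/
/-! For a nonzero `x`, the map `λ ↦ J λ x` is injective (each `J λ`, `λ ≠ 0`, is) and, by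
skew-adjointness, lands in `(ℝ ∙ x)ᗮ`, a subspace of dimension `d₁ - 1`. -/

open RealInnerProductSpace Module

section

variable {V E : Type*} [AddCommGroup V] [Module ℝ V]
  [NormedAddCommGroup E] [InnerProductSpace ℝ E]

theorem inner_apply_self_eq_zero_of_skew {T : E →ₗ[ℝ] E}
    (hT : ∀ x y, ⟪T x, y⟫ = -⟪x, T y⟫) (x : E) : ⟪T x, x⟫ = 0 := by
  linarith [hT x x, real_inner_comm x (T x)]

variable [FiniteDimensional ℝ E]

theorem finrank_lt_of_injective_of_inner_eq_zero {f : V →ₗ[ℝ] E} (hf : Function.Injective f)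
    {x : E} (hx : x ≠ 0) (horth : ∀ v, ⟪f v, x⟫ = 0) :
    finrank ℝ V < finrank ℝ E := by
  have hmem : ∀ v, f v ∈ (ℝ ∙ x)ᗮ := fun v =>
    Submodule.mem_orthogonal_singleton_iff_inner_left.2 (horth v)
  have hle : finrank ℝ V ≤ finrank ℝ (ℝ ∙ x)ᗮ :=
    LinearMap.finrank_le_finrank_of_injective ((LinearMap.injective_codRestrict_iff hmem).2 hf)
  have hsum := (ℝ ∙ x).finrank_add_finrank_orthogonal
  rw [finrank_span_singleton hx] at hsum
  omega

theorem finrank_lt_of_skew_of_injective [Nontrivial E] (J : V →ₗ[ℝ] E →ₗ[ℝ] E)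
    (hskew : ∀ v x y, ⟪J v x, y⟫ = -⟪x, J v y⟫)
    (hinj : ∀ v, v ≠ 0 → Function.Injective (J v)) :
    finrank ℝ V < finrank ℝ E := by
  obtain ⟨x, hx⟩ := exists_ne (0 : E)
  have hflip_inj : Function.Injective (J.flip x) := by
    rw [← LinearMap.ker_eq_bot, Submodule.eq_bot_iff]
    intro v hv
    by_contra hv0
    exact hx (hinj v hv0 (by simpa using hv))
  exact finrank_lt_of_injective_of_inner_eq_zero hflip_inj hx
    fun v => inner_apply_self_eq_zero_of_skew (hskew v) x

end

theorem metivier_dim_lt_general (d₁ d₂ : ℕ) (hd₁ : 0 < d₁)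
    (J : EuclideanSpace ℝ (Fin d₂) →ₗ[ℝ]
      (EuclideanSpace ℝ (Fin d₁) →ₗ[ℝ] EuclideanSpace ℝ (Fin d₁)))
    (hskew : ∀ (lam : EuclideanSpace ℝ (Fin d₂)) (x y : EuclideanSpace ℝ (Fin d₁)),
      ⟪J lam x, y⟫ = - ⟪x, J lam y⟫)
    (hbij : ∀ lam : EuclideanSpace ℝ (Fin d₂), lam ≠ 0 → Function.Bijective (J lam)) :
    d₂ < d₁ := by
  have : NeZero d₁ := ⟨hd₁.ne'⟩
  simpa using finrank_lt_of_skew_of_injective J hskew fun lam hlam => (hbij lam hlam).injective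

/-- On a Métivier group, the dimension of the second layer is strictly smaller
than the dimension of the first layer: if `J : ℝ^{d₂} → End(ℝ^{d₁})` is a linear
family of skew-adjoint endomorphisms that are bijective for every nonzero
parameter, then `d₂ < d₁`. -/
theorem metivier_dim_lt (d₁ d₂ : ℕ) (hd₁ : 0 < d₁) (hd₂ : 0 < d₂)
    (J : EuclideanSpace ℝ (Fin d₂) →ₗ[ℝ]
      (EuclideanSpace ℝ (Fin d₁) →ₗ[ℝ] EuclideanSpace ℝ (Fin d₁)))
    (hskew : ∀ (lam : EuclideanSpace ℝ (Fin d₂)) (x y : EuclideanSpace ℝ (Fin d₁)),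
      ⟪J lam x, y⟫ = - ⟪x, J lam y⟫)
    (hbij : ∀ lam : EuclideanSpace ℝ (Fin d₂), lam ≠ 0 → Function.Bijective (J lam)) :
    d₂ < d₁ :=
  metivier_dim_lt_general d₁ d₂ hd₁ J hskew hbij
end

section
/- Consider the two-step group model on ℝ^{d₁} × ℝ^{d₂}, and assume in addition that the range of ω spans ℝ^{d₂}. Let χ : ℝ^{d₁} × ℝ^{d₂} → ℝ be continuous, strictly positive, and multiplicative for the group law, i.e. χ(g·h) = χ(g)·χ(h) for all g, h. Then there exists a vector v ∈ ℝ^{d₁} such that χ(x,u) = exp(⟨v,x⟩) for all (x,u) ∈ ℝ^{d₁} × ℝ^{d₂}; in particular χ is trivial on the second layer, χ(0,u) = 1 for all u. -/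
/-!
Writing `(x,u) = (x,0)·(0,u)` splits `χ` into a character of the first layer and one of the
centre `0 × ℝ^{d₂}`. A continuous positive character of a real vector space is `exp` of a
continuous linear functional. Since the target `ℝ` is commutative, `χ` is trivial on commutators,
and `(y,0)·(x,0) = (x,0)·(y,0)·(0, ω y x)` shows that these are exactly the central elements
`(0, ω y x)`. So the functional on the centre vanishes on the range of `ω`, which spans, and the
remaining character of the first layer is `exp ⟪v, ·⟫` by Riesz representation.
-/

open RealInnerProductSpace

/-- The two-step group product on `ℝ^{d₁} × ℝ^{d₂}`:
`(x,u)·(y,s) = (x + y, u + s + (1/2) ω(x,y))`. -/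
noncomputable def gmul {d₁ d₂ : ℕ}
    (ω : EuclideanSpace ℝ (Fin d₁) →ₗ[ℝ]
      (EuclideanSpace ℝ (Fin d₁) →ₗ[ℝ] EuclideanSpace ℝ (Fin d₂)))
    (a b : EuclideanSpace ℝ (Fin d₁) × EuclideanSpace ℝ (Fin d₂)) :
    EuclideanSpace ℝ (Fin d₁) × EuclideanSpace ℝ (Fin d₂) :=
  (a.1 + b.1, a.2 + b.2 + (2⁻¹ : ℝ) • ω a.1 b.1)

theorem exists_continuousLinearMap_eq_exp_of_map_add
    {E : Type*} [AddCommGroup E] [Module ℝ E] [TopologicalSpace E] [ContinuousSMul ℝ E]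
    {f : E → ℝ} (hf : Continuous f) (hpos : ∀ x, 0 < f x)
    (hadd : ∀ x y, f (x + y) = f x * f y) :
    ∃ L : E →L[ℝ] ℝ, ∀ x, f x = Real.exp (L x) := by
  have hzero : f 0 = 1 := (mul_eq_left₀ (hpos 0).ne').1 (by rw [← hadd, add_zero])
  let logf : E →+ ℝ :=
    { toFun := fun x => Real.log (f x)
      map_zero' := by simp only [hzero, Real.log_one]
      map_add' := fun x y => by simp only [hadd, Real.log_mul (hpos x).ne' (hpos y).ne'] }
  exact ⟨logf.toRealLinearMap (hf.log fun x => (hpos x).ne'),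
    fun x => (Real.exp_log (hpos x)).symm⟩

theorem exists_inner_eq_exp_of_map_add
    {E : Type*} [NormedAddCommGroup E] [InnerProductSpace ℝ E] [CompleteSpace E]
    {f : E → ℝ} (hf : Continuous f) (hpos : ∀ x, 0 < f x)
    (hadd : ∀ x y, f (x + y) = f x * f y) :
    ∃ v : E, ∀ x, f x = Real.exp ⟪v, x⟫ := by
  obtain ⟨L, hL⟩ := exists_continuousLinearMap_eq_exp_of_map_add hf hpos hadd
  exact ⟨(InnerProductSpace.toDual ℝ E).symm L,
    fun x => by rw [InnerProductSpace.toDual_symm_apply, hL]⟩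

namespace TwoStepGroup

variable {d₁ d₂ : ℕ}
  {ω : EuclideanSpace ℝ (Fin d₁) →ₗ[ℝ]
    (EuclideanSpace ℝ (Fin d₁) →ₗ[ℝ] EuclideanSpace ℝ (Fin d₂))}

theorem gmul_zero_fst_right (p : EuclideanSpace ℝ (Fin d₁) × EuclideanSpace ℝ (Fin d₂))
    (u : EuclideanSpace ℝ (Fin d₂)) : gmul ω p (0, u) = (p.1, p.2 + u) := by
  simp [gmul]

theorem gmul_snd_zero_snd_zero (x y : EuclideanSpace ℝ (Fin d₁)) :
    gmul ω (x, 0) (y, 0) = (x + y, (2⁻¹ : ℝ) • ω x y) := by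
  simp [gmul]

theorem gmul_swap_eq_gmul_bracket (halt : ω.IsAlt) (x y : EuclideanSpace ℝ (Fin d₁)) :
    gmul ω (y, 0) (x, 0) = gmul ω (gmul ω (x, 0) (y, 0)) (0, ω y x) := by
  rw [gmul_zero_fst_right, gmul_snd_zero_snd_zero, gmul_snd_zero_snd_zero, ← halt.neg y x,
    add_comm y x]
  congr 1
  module

variable {χ : EuclideanSpace ℝ (Fin d₁) × EuclideanSpace ℝ (Fin d₂) → ℝ}
  (hχmul : ∀ g h, χ (gmul ω g h) = χ g * χ h)
include hχmul

theorem char_eq_char_fst_mul_char_snd (x : EuclideanSpace ℝ (Fin d₁))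
    (u : EuclideanSpace ℝ (Fin d₂)) : χ (x, u) = χ (x, 0) * χ (0, u) := by
  rw [← hχmul, gmul_zero_fst_right, zero_add]

theorem char_center_add (u s : EuclideanSpace ℝ (Fin d₂)) :
    χ (0, u + s) = χ (0, u) * χ (0, s) := by
  rw [← hχmul, gmul_zero_fst_right]

theorem char_bracket_eq_one (hχpos : ∀ p, 0 < χ p) (halt : ω.IsAlt)
    (x y : EuclideanSpace ℝ (Fin d₁)) : χ (0, ω y x) = 1 := by
  have h := hχmul (gmul ω (x, 0) (y, 0)) (0, ω y x)
  rw [← gmul_swap_eq_gmul_bracket halt, hχmul, hχmul, mul_comm (χ (y, 0))] at h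
  exact (mul_eq_left₀ (mul_pos (hχpos _) (hχpos _)).ne').1 h.symm

theorem char_center_eq_one (hχcont : Continuous χ) (hχpos : ∀ p, 0 < χ p) (halt : ω.IsAlt)
    (hspan : Submodule.span ℝ (Set.range fun p : EuclideanSpace ℝ (Fin d₁) ×
      EuclideanSpace ℝ (Fin d₁) => ω p.1 p.2) = ⊤)
    (u : EuclideanSpace ℝ (Fin d₂)) : χ (0, u) = 1 := by
  obtain ⟨L, hL⟩ := exists_continuousLinearMap_eq_exp_of_map_add (f := fun u => χ (0, u))
    (by fun_prop) (fun _ => hχpos _) (char_center_add hχmul)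
  have hL_zero : (L : EuclideanSpace ℝ (Fin d₂) →ₗ[ℝ] ℝ) = 0 :=
    LinearMap.ext_on_range hspan fun p => Real.exp_eq_one_iff _ |>.1 <|
      (hL _).symm.trans (char_bracket_eq_one hχmul hχpos halt p.2 p.1)
  rw [hL, show L u = 0 from LinearMap.congr_fun hL_zero u, Real.exp_zero]

theorem char_first_layer_add (hcenter : ∀ u, χ (0, u) = 1) (x y : EuclideanSpace ℝ (Fin d₁)) :
    χ (x + y, 0) = χ (x, 0) * χ (y, 0) := by
  rw [← hχmul, gmul_snd_zero_snd_zero, char_eq_char_fst_mul_char_snd hχmul _ (_ • _), hcenter,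
    mul_one]

end TwoStepGroup

open TwoStepGroup

theorem positive_character_form_general (d₁ d₂ : ℕ)
    (ω : EuclideanSpace ℝ (Fin d₁) →ₗ[ℝ]
      (EuclideanSpace ℝ (Fin d₁) →ₗ[ℝ] EuclideanSpace ℝ (Fin d₂)))
    (halt : ∀ x : EuclideanSpace ℝ (Fin d₁), ω x x = 0)
    (hspan : Submodule.span ℝ
      (Set.range fun p : EuclideanSpace ℝ (Fin d₁) × EuclideanSpace ℝ (Fin d₁) =>
        ω p.1 p.2) = ⊤)
    (χ : EuclideanSpace ℝ (Fin d₁) × EuclideanSpace ℝ (Fin d₂) → ℝ)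
    (hχcont : Continuous χ)
    (hχpos : ∀ p, 0 < χ p)
    (hχmul : ∀ g h, χ (gmul ω g h) = χ g * χ h) :
    ∃ v : EuclideanSpace ℝ (Fin d₁),
      (∀ (x : EuclideanSpace ℝ (Fin d₁)) (u : EuclideanSpace ℝ (Fin d₂)),
        χ (x, u) = Real.exp ⟪v, x⟫) ∧
      (∀ u : EuclideanSpace ℝ (Fin d₂), χ (0, u) = 1) := by
  have hcenter := char_center_eq_one hχmul hχcont hχpos halt hspan
  obtain ⟨v, hv⟩ := exists_inner_eq_exp_of_map_add (f := fun x => χ (x, 0))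
    (by fun_prop) (fun _ => hχpos _) (char_first_layer_add hχmul hcenter)
  refine ⟨v, fun x u => ?_, hcenter⟩
  rw [char_eq_char_fst_mul_char_snd hχmul, hcenter, mul_one, hv]

/-- Every continuous positive character of the two-step group model (whose bracket
spans the whole second layer) is of the form `χ(x,u) = exp⟨v,x⟩`; in particular
it is trivial on the second layer. -/
theorem positive_character_form (d₁ d₂ : ℕ) (hd₁ : 0 < d₁) (hd₂ : 0 < d₂)
    (ω : EuclideanSpace ℝ (Fin d₁) →ₗ[ℝ]
      (EuclideanSpace ℝ (Fin d₁) →ₗ[ℝ] EuclideanSpace ℝ (Fin d₂)))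
    (halt : ∀ x : EuclideanSpace ℝ (Fin d₁), ω x x = 0)
    (hspan : Submodule.span ℝ
      (Set.range fun p : EuclideanSpace ℝ (Fin d₁) × EuclideanSpace ℝ (Fin d₁) =>
        ω p.1 p.2) = ⊤)
    (χ : EuclideanSpace ℝ (Fin d₁) × EuclideanSpace ℝ (Fin d₂) → ℝ)
    (hχcont : Continuous χ)
    (hχpos : ∀ p, 0 < χ p)
    (hχmul : ∀ g h, χ (gmul ω g h) = χ g * χ h) :
    ∃ v : EuclideanSpace ℝ (Fin d₁),
      (∀ (x : EuclideanSpace ℝ (Fin d₁)) (u : EuclideanSpace ℝ (Fin d₂)),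
        χ (x, u) = Real.exp ⟪v, x⟫) ∧
      (∀ u : EuclideanSpace ℝ (Fin d₂), χ (0, u) = 1) :=
  positive_character_form_general d₁ d₂ ω halt hspan χ hχcont hχpos hχmul
end

section
/- Consider the two-step group model on ℝ^{d₁} × ℝ^{d₂}, and assume the range of ω spans ℝ^{d₂}. Let χ : ℝ^{d₁} × ℝ^{d₂} → ℝ be continuous, strictly positive, and multiplicative for the group law. Then there exists a constant c ≥ 0 such that χ(x,u) ≤ exp(c(|x| + |u|^{1/2})) for all (x,u) ∈ ℝ^{d₁} × ℝ^{d₂}. -/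
/-!
Taking logarithms turns `χ` into a continuous additive character `f` of the group. On the centre
`0 × ℝ^{d₂}` it is a continuous additive map, hence a linear functional `Φ`. Comparing
`(x,0)·(y,0)` with `(y,0)·(x,0)` shows that `Φ` kills `ω(x,y)` (as `ω` is alternating), so `Φ = 0`
since the range of `ω` spans. Then `f(x,u) = f(x,0)` is additive and continuous in `x`, i.e. a
linear functional `G x`, and `χ(x,u) = exp(G x) ≤ exp(‖G‖ ‖x‖)`.
-/

namespace TwoStep

variable {d₁ d₂ : ℕ}
  {ω : EuclideanSpace ℝ (Fin d₁) →ₗ[ℝ] EuclideanSpace ℝ (Fin d₁) →ₗ[ℝ] EuclideanSpace ℝ (Fin d₂)}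
  {f : EuclideanSpace ℝ (Fin d₁) × EuclideanSpace ℝ (Fin d₂) → ℝ}

theorem apply_zero_add (hf : ∀ a b, f (gmul ω a b) = f a + f b)
    (u v : EuclideanSpace ℝ (Fin d₂)) :
    f (0, u + v) = f (0, u) + f (0, v) := by
  simpa [gmul] using hf (0, u) (0, v)

theorem apply_eq_add (hf : ∀ a b, f (gmul ω a b) = f a + f b)
    (x : EuclideanSpace ℝ (Fin d₁)) (u : EuclideanSpace ℝ (Fin d₂)) :
    f (x, u) = f (x, 0) + f (0, u) := by
  simpa [gmul] using hf (x, 0) (0, u)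

theorem apply_add_zero (hf : ∀ a b, f (gmul ω a b) = f a + f b)
    (x y : EuclideanSpace ℝ (Fin d₁)) :
    f (x + y, 0) + f (0, (2⁻¹ : ℝ) • ω x y) = f (x, 0) + f (y, 0) := by
  rw [← apply_eq_add hf, ← hf]
  simp [gmul]

theorem exists_clm_apply_zero_eq (hcont : Continuous f)
    (hf : ∀ a b, f (gmul ω a b) = f a + f b) :
    ∃ Φ : EuclideanSpace ℝ (Fin d₂) →L[ℝ] ℝ, ∀ u, f (0, u) = Φ u :=
  ⟨(AddMonoidHom.mk' (fun u => f (0, u)) (apply_zero_add hf)).toRealLinearMap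
    (hcont.comp (Continuous.prodMk_right 0)), fun _ => rfl⟩

theorem apply_zero_eq_zero (halt : ω.IsAlt)
    (hspan : Submodule.span ℝ
      (Set.range fun p : EuclideanSpace ℝ (Fin d₁) × EuclideanSpace ℝ (Fin d₁) => ω p.1 p.2) = ⊤)
    (hcont : Continuous f) (hf : ∀ a b, f (gmul ω a b) = f a + f b)
    (u : EuclideanSpace ℝ (Fin d₂)) :
    f (0, u) = 0 := by
  obtain ⟨Φ, hΦ⟩ := exists_clm_apply_zero_eq hcont hf
  -- `(x,0)` and `(y,0)` have the same product in either order, up to the central `±ω(x,y)/2`.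
  have hcomm (x y : EuclideanSpace ℝ (Fin d₁)) : Φ (ω x y) = 0 := by
    have hxy := apply_add_zero hf x y
    have hyx := apply_add_zero hf y x
    rw [add_comm y x, ← halt.neg x y] at hyx
    rw [hΦ] at hxy hyx
    simp only [map_smul, map_neg, smul_eq_mul] at hxy hyx
    linarith
  have hΦ0 : (Φ : EuclideanSpace ℝ (Fin d₂) →ₗ[ℝ] ℝ) = 0 :=
    LinearMap.ext_on_range hspan fun p => hcomm p.1 p.2
  simpa [hΦ] using LinearMap.congr_fun hΦ0 u

theorem exists_clm_apply_eq (halt : ω.IsAlt)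
    (hspan : Submodule.span ℝ
      (Set.range fun p : EuclideanSpace ℝ (Fin d₁) × EuclideanSpace ℝ (Fin d₁) => ω p.1 p.2) = ⊤)
    (hcont : Continuous f) (hf : ∀ a b, f (gmul ω a b) = f a + f b) :
    ∃ G : EuclideanSpace ℝ (Fin d₁) →L[ℝ] ℝ, ∀ x u, f (x, u) = G x := by
  have hcenter := apply_zero_eq_zero halt hspan hcont hf
  have hadd (x y : EuclideanSpace ℝ (Fin d₁)) :
      f (x + y, 0) = f (x, 0) + f (y, 0) := by
    simpa [hcenter] using apply_add_zero hf x y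
  refine ⟨(AddMonoidHom.mk' (fun x => f (x, 0)) hadd).toRealLinearMap
    (hcont.comp (Continuous.prodMk_left 0)), fun x u => ?_⟩
  simp only [apply_eq_add hf x u, hcenter, add_zero]
  rfl

end TwoStep

theorem positive_character_growth_general (d₁ d₂ : ℕ)
    (ω : EuclideanSpace ℝ (Fin d₁) →ₗ[ℝ]
      (EuclideanSpace ℝ (Fin d₁) →ₗ[ℝ] EuclideanSpace ℝ (Fin d₂)))
    (halt : ∀ x : EuclideanSpace ℝ (Fin d₁), ω x x = 0)
    (hspan : Submodule.span ℝ
      (Set.range fun p : EuclideanSpace ℝ (Fin d₁) × EuclideanSpace ℝ (Fin d₁) =>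
        ω p.1 p.2) = ⊤)
    (χ : EuclideanSpace ℝ (Fin d₁) × EuclideanSpace ℝ (Fin d₂) → ℝ)
    (hχcont : Continuous χ)
    (hχpos : ∀ p, 0 < χ p)
    (hχmul : ∀ g h, χ (gmul ω g h) = χ g * χ h) :
    ∃ c : ℝ, 0 ≤ c ∧
      ∀ (x : EuclideanSpace ℝ (Fin d₁)) (u : EuclideanSpace ℝ (Fin d₂)),
        χ (x, u) ≤ Real.exp (c * (‖x‖ + Real.sqrt ‖u‖)) := by
  have hlog (a b) : Real.log (χ (gmul ω a b)) = Real.log (χ a) + Real.log (χ b) := by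
    rw [hχmul, Real.log_mul (hχpos a).ne' (hχpos b).ne']
  obtain ⟨G, hG⟩ := TwoStep.exists_clm_apply_eq halt hspan
    (hχcont.log fun p => (hχpos p).ne') hlog
  refine ⟨‖G‖, norm_nonneg G, fun x u => ?_⟩
  calc χ (x, u) = Real.exp (G x) := by rw [← hG x u, Real.exp_log (hχpos _)]
    _ ≤ Real.exp (‖G‖ * ‖x‖) := Real.exp_le_exp.2 ((le_abs_self _).trans (G.le_opNorm x))
    _ ≤ Real.exp (‖G‖ * (‖x‖ + Real.sqrt ‖u‖)) := by
      gcongr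
      exact le_add_of_nonneg_right (Real.sqrt_nonneg _)

/-- Pointwise growth estimate for a continuous positive character of the two-step
group model: `χ(x,u) ≤ exp(c(|x| + |u|^{1/2}))` for some `c ≥ 0`. -/
theorem positive_character_growth (d₁ d₂ : ℕ) (hd₁ : 0 < d₁) (hd₂ : 0 < d₂)
    (ω : EuclideanSpace ℝ (Fin d₁) →ₗ[ℝ]
      (EuclideanSpace ℝ (Fin d₁) →ₗ[ℝ] EuclideanSpace ℝ (Fin d₂)))
    (halt : ∀ x : EuclideanSpace ℝ (Fin d₁), ω x x = 0)
    (hspan : Submodule.span ℝ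
      (Set.range fun p : EuclideanSpace ℝ (Fin d₁) × EuclideanSpace ℝ (Fin d₁) =>
        ω p.1 p.2) = ⊤)
    (χ : EuclideanSpace ℝ (Fin d₁) × EuclideanSpace ℝ (Fin d₂) → ℝ)
    (hχcont : Continuous χ)
    (hχpos : ∀ p, 0 < χ p)
    (hχmul : ∀ g h, χ (gmul ω g h) = χ g * χ h) :
    ∃ c : ℝ, 0 ≤ c ∧
      ∀ (x : EuclideanSpace ℝ (Fin d₁)) (u : EuclideanSpace ℝ (Fin d₂)),
        χ (x, u) ≤ Real.exp (c * (‖x‖ + Real.sqrt ‖u‖)) :=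
  positive_character_growth_general d₁ d₂ ω halt hspan χ hχcont hχpos hχmul
end

section
/- Let d₁, d₂ be positive integers and Q = d₁ + 2d₂. Let α, β ≥ 0 satisfy α + β > Q and α < d₁. Then there exists a constant C > 0 such that for every R > 0, ∫_{ℝ^{d₁}×ℝ^{d₂}} (1 + R(|x| + |u|^{1/2}))^{−β} (1 + R|x|)^{−α} dx du ≤ C R^{−Q}. -/
/-!
The integrand is `w (R x, R² u)` for the weight `w (x, u) = (1 + |x| + |u|^{1/2})^{-β} (1 + |x|)^{-α}`,
and the dilation `(x, u) ↦ (R x, R² u)` has Jacobian `R^Q`, so the integral is exactly `R^{-Q} ∫ w`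
and `C = ∫ w` works once `w` is integrable. For `2 d₂ < b < min β (α + β - d₁)`,
`(1 + |x| + |u|^{1/2})^{-β} ≤ (1 + |x|)^{-(β - b)} (1 + |u|^{1/2})^{-b}` and
`(1 + |u|^{1/2})^{-b} ≤ (1 + |u|)^{-b/2}` dominate `w` by the product of the integrable functions
`(1 + |x|)^{-(α + β - b)}` and `(1 + |u|)^{-b/2}`.
-/

open MeasureTheory Module

lemma one_add_add_rpow_neg_le {s t a b : ℝ} (hs : 0 ≤ s) (ht : 0 ≤ t) (ha : 0 ≤ a) (hb : 0 ≤ b) :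
    (1 + (s + t)) ^ (-(a + b)) ≤ (1 + s) ^ (-a) * (1 + t) ^ (-b) := by
  rw [neg_add, Real.rpow_add (by positivity)]
  exact mul_le_mul (Real.rpow_le_rpow_of_nonpos (by positivity) (by linarith) (by linarith))
    (Real.rpow_le_rpow_of_nonpos (by positivity) (by linarith) (by linarith)) (by positivity)
    (by positivity)

lemma one_add_sqrt_rpow_neg_le {t b : ℝ} (ht : 0 ≤ t) (hb : 0 ≤ b) :
    (1 + √t) ^ (-b) ≤ (1 + t) ^ (-(b / 2)) := by
  have h : √(1 + t) ≤ 1 + √t := by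
    rw [Real.sqrt_le_left (by positivity)]
    nlinarith [Real.sq_sqrt ht, Real.sqrt_nonneg t]
  calc (1 + √t) ^ (-b) ≤ √(1 + t) ^ (-b) :=
        Real.rpow_le_rpow_of_nonpos (by positivity) h (by linarith)
    _ = (1 + t) ^ (-(b / 2)) := by
        rw [Real.sqrt_eq_rpow, ← Real.rpow_mul (by positivity)]
        ring_nf

section HomogeneousNorm

variable {E F : Type*} [NormedAddCommGroup E] [NormedAddCommGroup F]

noncomputable def homNorm (p : E × F) : ℝ := ‖p.1‖ + √‖p.2‖

lemma homNorm_nonneg (p : E × F) : 0 ≤ homNorm p := by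
  unfold homNorm
  positivity

noncomputable def homWeight (α β : ℝ) (p : E × F) : ℝ :=
  (1 + homNorm p) ^ (-β) * (1 + ‖p.1‖) ^ (-α)

lemma homWeight_pos (α β : ℝ) (p : E × F) : 0 < homWeight α β p := by
  have := homNorm_nonneg p
  unfold homWeight
  positivity

lemma integral_homWeight_pos [MeasurableSpace E] [MeasurableSpace F] {m : Measure (E × F)}
    [NeZero m] {α β : ℝ} (h : Integrable (homWeight α β) m) :
    0 < ∫ p, homWeight α β p ∂m := by
  rw [integral_pos_iff_support_of_nonneg (fun p ↦ (homWeight_pos α β p).le) h,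
    Function.support_eq_univ fun p ↦ (homWeight_pos α β p).ne']
  exact Measure.measure_univ_pos.2 (NeZero.ne _)

variable [NormedSpace ℝ E] [NormedSpace ℝ F]

lemma homNorm_smul_prod {r : ℝ} (hr : 0 ≤ r) (p : E × F) :
    homNorm (r • p.1, r ^ 2 • p.2) = r * homNorm p := by
  simp only [homNorm, norm_smul, Real.norm_eq_abs, abs_of_nonneg hr, abs_of_nonneg (sq_nonneg r),
    Real.sqrt_mul (sq_nonneg r), Real.sqrt_sq hr]
  ring

lemma homWeight_smul_prod (α β : ℝ) {r : ℝ} (hr : 0 ≤ r) (p : E × F) :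
    homWeight α β (r • p.1, r ^ 2 • p.2) =
      (1 + r * homNorm p) ^ (-β) * (1 + r * ‖p.1‖) ^ (-α) := by
  rw [homWeight, homNorm_smul_prod hr, norm_smul, Real.norm_of_nonneg hr]

end HomogeneousNorm

section HaarMeasure

variable {E F : Type*} [NormedAddCommGroup E] [NormedSpace ℝ E] [FiniteDimensional ℝ E]
  [MeasurableSpace E] [BorelSpace E] {μ : Measure E} [μ.IsAddHaarMeasure]
  [NormedAddCommGroup F] [NormedSpace ℝ F] [FiniteDimensional ℝ F]
  [MeasurableSpace F] [BorelSpace F] {ν : Measure F} [ν.IsAddHaarMeasure]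

lemma integrable_one_add_sqrt_norm_rpow_neg {b : ℝ} (hb : 2 * (finrank ℝ E : ℝ) < b) :
    Integrable (fun v : E ↦ (1 + √‖v‖) ^ (-b)) μ := by
  refine (integrable_one_add_norm (r := b / 2) (by linarith)).mono'
    (Measurable.aestronglyMeasurable (by fun_prop)) (Filter.Eventually.of_forall fun v ↦ ?_)
  rw [Real.norm_of_nonneg (by positivity)]
  exact one_add_sqrt_rpow_neg_le (norm_nonneg v) (by linarith [(finrank ℝ E).cast_nonneg (α := ℝ)])

lemma integrable_homWeight {α β : ℝ} (hβ : 2 * (finrank ℝ F : ℝ) < β)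
    (hαβ : (finrank ℝ E : ℝ) + 2 * finrank ℝ F < α + β) :
    Integrable (homWeight α β) (μ.prod ν) := by
  obtain ⟨b, hb, hbβ⟩ := exists_between
    (lt_min hβ (by linarith : 2 * (finrank ℝ F : ℝ) < α + β - finrank ℝ E))
  have hb₀ : 0 ≤ b := by linarith [(finrank ℝ F).cast_nonneg (α := ℝ)]
  have hβb : 0 ≤ β - b := by linarith [min_le_left β (α + β - finrank ℝ E)]
  have hdom := (integrable_one_add_norm (μ := μ) (r := α + (β - b))
    (by linarith [min_le_right β (α + β - finrank ℝ E)])).mul_prod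
    (integrable_one_add_sqrt_norm_rpow_neg (μ := ν) hb)
  refine hdom.mono' (Measurable.aestronglyMeasurable (by unfold homWeight homNorm; fun_prop))
    (Filter.Eventually.of_forall fun p ↦ ?_)
  rw [Real.norm_of_nonneg (homWeight_pos α β p).le]
  have hsplit := one_add_add_rpow_neg_le (norm_nonneg p.1) (Real.sqrt_nonneg ‖p.2‖) hβb hb₀
  rw [sub_add_cancel] at hsplit
  calc homWeight α β p
      ≤ ((1 + ‖p.1‖) ^ (-(β - b)) * (1 + √‖p.2‖) ^ (-b)) * (1 + ‖p.1‖) ^ (-α) := by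
        unfold homWeight
        gcongr
        exact hsplit
    _ = (1 + ‖p.1‖) ^ (-(α + (β - b))) * (1 + √‖p.2‖) ^ (-b) := by
        rw [neg_add, Real.rpow_add (by positivity)]
        ring

lemma integral_comp_smul_prod {G : Type*} [NormedAddCommGroup G] [NormedSpace ℝ G]
    (f : E × F → G) {r s : ℝ} (hr : 0 < r) (hs : 0 < s) :
    ∫ p, f (r • p.1, s • p.2) ∂(μ.prod ν) =
      ((r ^ finrank ℝ E)⁻¹ * (s ^ finrank ℝ F)⁻¹) • ∫ p, f p ∂(μ.prod ν) := by
  let e : E × F ≃ᵐ E × F := (Homeomorph.smul (Units.mk0 r hr.ne')).toMeasurableEquiv.prodCongr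
    (Homeomorph.smul (Units.mk0 s hs.ne')).toMeasurableEquiv
  have hmap : Measure.map e (μ.prod ν) =
      ENNReal.ofReal ((r ^ finrank ℝ E)⁻¹ * (s ^ finrank ℝ F)⁻¹) • μ.prod ν := by
    change Measure.map (Prod.map (r • ·) (s • ·)) (μ.prod ν) = _
    rw [← Measure.map_prod_map μ ν (measurable_const_smul r) (measurable_const_smul s),
      Measure.map_addHaar_smul μ hr.ne', Measure.map_addHaar_smul ν hs.ne',
      Measure.prod_smul_left, Measure.prod_smul_right, smul_smul,
      abs_of_pos (by positivity), abs_of_pos (by positivity), ENNReal.ofReal_mul (by positivity)]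
  calc ∫ p, f (r • p.1, s • p.2) ∂(μ.prod ν) = ∫ p, f (e p) ∂(μ.prod ν) := rfl
    _ = _ := by
      rw [← integral_map_equiv e f, hmap, integral_smul_measure,
        ENNReal.toReal_ofReal (by positivity)]

end HaarMeasure

theorem weighted_integral_bound_general (d₁ d₂ : ℕ)
    (α β : ℝ)
    (hQ : (d₁ : ℝ) + 2 * d₂ < α + β) (hα1 : α < d₁) :
    ∃ C : ℝ, 0 < C ∧ ∀ R : ℝ, 0 < R →
      (∫ p : EuclideanSpace ℝ (Fin d₁) × EuclideanSpace ℝ (Fin d₂),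
        (1 + R * (‖p.1‖ + Real.sqrt ‖p.2‖)) ^ (-β) * (1 + R * ‖p.1‖) ^ (-α))
      ≤ C * R ^ (-((d₁ : ℝ) + 2 * d₂)) := by
  have hint : Integrable (homWeight α β)
      (volume : Measure (EuclideanSpace ℝ (Fin d₁) × EuclideanSpace ℝ (Fin d₂))) :=
    integrable_homWeight (by simp only [finrank_euclideanSpace_fin]; linarith)
      (by simpa only [finrank_euclideanSpace_fin] using hQ)
  refine ⟨∫ p, homWeight α β p, integral_homWeight_pos hint, fun R hR ↦ le_of_eq ?_⟩
  have hdil : (R ^ d₁)⁻¹ * ((R ^ 2) ^ d₂)⁻¹ = R ^ (-((d₁ : ℝ) + 2 * d₂)) := by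
    rw [Real.rpow_neg hR.le, ← pow_mul, ← mul_inv, ← pow_add, ← Real.rpow_natCast]
    push_cast
    ring_nf
  calc _ = ∫ p : EuclideanSpace ℝ (Fin d₁) × EuclideanSpace ℝ (Fin d₂),
        homWeight α β (R • p.1, R ^ 2 • p.2) := by
        simp only [homWeight_smul_prod α β hR.le]
        rfl
    _ = _ := by
      rw [Measure.volume_eq_prod, integral_comp_smul_prod _ hR (pow_pos hR 2),
        finrank_euclideanSpace_fin, finrank_euclideanSpace_fin, hdil, smul_eq_mul, mul_comm]

/-- Integral estimate with homogeneous-norm and first-layer weights (Lemma 2.3):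
if `α + β > Q` and `0 ≤ α < d₁`, then
`∫ (1 + R(|x|+|u|^{1/2}))^{−β} (1 + R|x|)^{−α} dx du ≤ C R^{−Q}` for all `R > 0`. -/
theorem weighted_integral_bound (d₁ d₂ : ℕ) (hd₁ : 0 < d₁) (hd₂ : 0 < d₂)
    (α β : ℝ) (hα0 : 0 ≤ α) (hβ0 : 0 ≤ β)
    (hQ : (d₁ : ℝ) + 2 * d₂ < α + β) (hα1 : α < d₁) :
    ∃ C : ℝ, 0 < C ∧ ∀ R : ℝ, 0 < R →
      (∫ p : EuclideanSpace ℝ (Fin d₁) × EuclideanSpace ℝ (Fin d₂),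
        (1 + R * (‖p.1‖ + Real.sqrt ‖p.2‖)) ^ (-β) * (1 + R * ‖p.1‖) ^ (-α))
      ≤ C * R ^ (-((d₁ : ℝ) + 2 * d₂)) :=
  weighted_integral_bound_general d₁ d₂ α β hQ hα1
end
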